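/- arXiv:2509.10504 — 4 statements merged into one kernel-verified Lean document; each statement's English description precedes it below -/
import Mathlib

section
/- Let S, A, T, r, γ be a worst-path tree MDP and let π : S → A → ℝ be a stochastic policy (π s a ≥ 0 for all s, a and ∑_{a ∈ A} π s a = 1 for all s). Then the policy evaluation operator B^π, acting on bounded functions V : S → ℝ by (B^π V)(s) = r s + γ·(1 − r s)·∑_{a ∈ A} π s a · min_{s' ∈ T s a} V s', is a γ-contraction in the sup metric: dist(B^π V₁, B^π V₂) ≤ γ · dist(V₁, V₂) for all bounded V₁, V₂. -/
open BoundedContinuousFunction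

theorem abs_inf'_le_norm {S : Type*} [TopologicalSpace S] [DiscreteTopology S]
    (V : S →ᵇ ℝ) (t : Finset S) (ht : t.Nonempty) :
    |t.inf' ht V| ≤ ‖V‖ := by
  rw [abs_le]
  constructor
  · refine Finset.le_inf' _ _ fun b _ => ?_
    have h := V.norm_coe_le_norm b
    rw [Real.norm_eq_abs, abs_le] at h
    exact h.1
  · obtain ⟨b, hb⟩ := ht
    refine le_trans (Finset.inf'_le _ hb) ?_
    have h := V.norm_coe_le_norm b
    rw [Real.norm_eq_abs, abs_le] at h
    exact h.2

noncomputable def bellmanPol {S A : Type*} [Fintype A] [Nonempty A]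
    [TopologicalSpace S] [DiscreteTopology S]
    (T : S → A → Finset S) (hT : ∀ s a, (T s a).Nonempty)
    (r : S → ℝ) (hr : ∀ s, r s = 0 ∨ r s = 1) (γ : ℝ)
    (π : S → A → ℝ) (hπ0 : ∀ s a, 0 ≤ π s a) (hπ1 : ∀ s, ∑ a, π s a = 1)
    (V : S →ᵇ ℝ) : S →ᵇ ℝ :=
  BoundedContinuousFunction.ofNormedAddCommGroup
    (fun s => r s + γ * (1 - r s) *
      ∑ a, π s a * (T s a).inf' (hT s a) V)
    continuous_of_discreteTopology
    (1 + |γ| * ‖V‖)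
    (by
      intro s
      set M := ∑ a, π s a * (T s a).inf' (hT s a) V with hM
      have hsup : |M| ≤ ‖V‖ := by
        calc |M| ≤ ∑ a, |π s a * (T s a).inf' (hT s a) V| := Finset.abs_sum_le_sum_abs _ _
          _ ≤ ∑ a, π s a * ‖V‖ := by
              refine Finset.sum_le_sum fun a _ => ?_
              rw [abs_mul, abs_of_nonneg (hπ0 s a)]
              exact mul_le_mul_of_nonneg_left (abs_inf'_le_norm V (T s a) (hT s a)) (hπ0 s a)
          _ = ‖V‖ := by rw [← Finset.sum_mul, hπ1 s, one_mul]
      show ‖r s + γ * (1 - r s) * M‖ ≤ 1 + |γ| * ‖V‖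
      rcases hr s with h | h
      · have he : r s + γ * (1 - r s) * M = γ * M := by rw [h]; ring
        rw [Real.norm_eq_abs, he, abs_mul]
        nlinarith [abs_nonneg γ, abs_nonneg M, norm_nonneg V]
      · have he : r s + γ * (1 - r s) * M = 1 := by rw [h]; ring
        rw [Real.norm_eq_abs, he, abs_one]
        nlinarith [abs_nonneg γ, norm_nonneg V])


theorem abs_inf'_sub_inf'_le_dist {S : Type*} [TopologicalSpace S] [DiscreteTopology S]
    (V₁ V₂ : S →ᵇ ℝ) (t : Finset S) (ht : t.Nonempty) :
    |t.inf' ht V₁ - t.inf' ht V₂| ≤ dist V₁ V₂ := by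
  rw [abs_sub_le_iff]
  constructor
  · obtain ⟨b, hb, he⟩ := Finset.exists_mem_eq_inf' ht V₂
    have h1 : t.inf' ht V₁ ≤ V₁ b := Finset.inf'_le _ hb
    have h2 : V₁ b - V₂ b ≤ dist V₁ V₂ := by
      have := BoundedContinuousFunction.dist_coe_le_dist (f := V₁) (g := V₂) b
      rw [Real.dist_eq, abs_le] at this; linarith [this.2]
    rw [he]; linarith
  · obtain ⟨b, hb, he⟩ := Finset.exists_mem_eq_inf' ht V₁
    have h1 : t.inf' ht V₂ ≤ V₂ b := Finset.inf'_le _ hb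
    have h2 : V₂ b - V₁ b ≤ dist V₁ V₂ := by
      have := BoundedContinuousFunction.dist_coe_le_dist (f := V₁) (g := V₂) b
      rw [Real.dist_eq, abs_le] at this; linarith [this.1]
    rw [he]; linarith

/-- The policy evaluation operator for the worst-path objective is a `γ`-contraction
on bounded functions with the sup metric. -/
theorem bellmanPol_contraction {S A : Type*} [Fintype A] [Nonempty A]
    [TopologicalSpace S] [DiscreteTopology S]
    (T : S → A → Finset S) (hT : ∀ s a, (T s a).Nonempty)
    (r : S → ℝ) (hr : ∀ s, r s = 0 ∨ r s = 1)
    (γ : ℝ) (hγ : γ ∈ Set.Ioo (0:ℝ) 1)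
    (π : S → A → ℝ) (hπ0 : ∀ s a, 0 ≤ π s a) (hπ1 : ∀ s, ∑ a, π s a = 1)
    (V₁ V₂ : S →ᵇ ℝ) :
    dist (bellmanPol T hT r hr γ π hπ0 hπ1 V₁) (bellmanPol T hT r hr γ π hπ0 hπ1 V₂)
      ≤ γ * dist V₁ V₂ := by
  obtain ⟨hγ0, hγ1⟩ := hγ
  refine BoundedContinuousFunction.dist_le (by positivity) |>.2 fun s => ?_
  show dist (r s + γ * (1 - r s) * ∑ a, π s a * (T s a).inf' (hT s a) V₁)
      (r s + γ * (1 - r s) * ∑ a, π s a * (T s a).inf' (hT s a) V₂) ≤ γ * dist V₁ V₂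
  rw [Real.dist_eq]
  rcases hr s with h | h
  · have he : (r s + γ * (1 - r s) * ∑ a, π s a * (T s a).inf' (hT s a) V₁)
        - (r s + γ * (1 - r s) * ∑ a, π s a * (T s a).inf' (hT s a) V₂)
        = γ * ∑ a, π s a * ((T s a).inf' (hT s a) V₁ - (T s a).inf' (hT s a) V₂) := by
      rw [h, Finset.mul_sum, Finset.mul_sum, Finset.mul_sum]
      simp only [zero_add]
      rw [← Finset.sum_sub_distrib]
      exact Finset.sum_congr rfl fun a _ => by ring
    rw [he, abs_mul, abs_of_pos hγ0]
    refine mul_le_mul_of_nonneg_left ?_ hγ0.le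
    calc |∑ a, π s a * ((T s a).inf' (hT s a) V₁ - (T s a).inf' (hT s a) V₂)|
        ≤ ∑ a, |π s a * ((T s a).inf' (hT s a) V₁ - (T s a).inf' (hT s a) V₂)| :=
          Finset.abs_sum_le_sum_abs _ _
      _ ≤ ∑ a, π s a * dist V₁ V₂ := by
          refine Finset.sum_le_sum fun a _ => ?_
          rw [abs_mul, abs_of_nonneg (hπ0 s a)]
          exact mul_le_mul_of_nonneg_left
            (abs_inf'_sub_inf'_le_dist V₁ V₂ (T s a) (hT s a)) (hπ0 s a)
      _ = dist V₁ V₂ := by rw [← Finset.sum_mul, hπ1 s, one_mul]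
  · have he : (r s + γ * (1 - r s) * ∑ a, π s a * (T s a).inf' (hT s a) V₁)
        - (r s + γ * (1 - r s) * ∑ a, π s a * (T s a).inf' (hT s a) V₂) = 0 := by
      rw [h]; ring
    rw [he, abs_zero]
    positivity
end

section
/- Let S, A, T, r, γ be a worst-path tree MDP and π a stochastic policy. Then the policy evaluation operator B^π has exactly one bounded fixed point V^π : S → ℝ, i.e. a unique bounded function satisfying V^π(s) = r s + γ·(1 − r s)·∑_{a ∈ A} π s a · min_{s' ∈ T s a} V^π(s') for all s (the worst-path value recursion of Proposition 2). -/
open BoundedContinuousFunction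

lemma abs_inf'_sub_inf'_le {S : Type*} (t : Finset S) (ht : t.Nonempty) (f g : S → ℝ) (c : ℝ)
    (h : ∀ x ∈ t, |f x - g x| ≤ c) : |t.inf' ht f - t.inf' ht g| ≤ c := by
  rw [abs_sub_le_iff]
  constructor
  · obtain ⟨x, hx, he⟩ := t.exists_mem_eq_inf' ht g
    calc t.inf' ht f - t.inf' ht g ≤ f x - g x := by
          rw [he]; exact sub_le_sub_right (Finset.inf'_le _ hx) _
      _ ≤ c := le_trans (le_abs_self _) (h x hx)
  · obtain ⟨x, hx, he⟩ := t.exists_mem_eq_inf' ht f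
    calc t.inf' ht g - t.inf' ht f ≤ g x - f x := by
          rw [he]; exact sub_le_sub_right (Finset.inf'_le _ hx) _
      _ ≤ c := le_trans (le_abs_self _) (by rw [abs_sub_comm]; exact h x hx)

/-- The policy evaluation operator for the worst-path objective has exactly one
bounded fixed point `V^π`, the worst-path value of the policy. -/
theorem bellmanPol_existsUnique_fixedPoint {S A : Type*} [Fintype A] [Nonempty A]
    [TopologicalSpace S] [DiscreteTopology S]
    (T : S → A → Finset S) (hT : ∀ s a, (T s a).Nonempty)
    (r : S → ℝ) (hr : ∀ s, r s = 0 ∨ r s = 1)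
    (γ : ℝ) (hγ : γ ∈ Set.Ioo (0:ℝ) 1)
    (π : S → A → ℝ) (hπ0 : ∀ s a, 0 ≤ π s a) (hπ1 : ∀ s, ∑ a, π s a = 1) :
    ∃! V : S →ᵇ ℝ, ∀ s, V s = r s + γ * (1 - r s) *
      ∑ a, π s a * (T s a).inf' (hT s a) V := by
  obtain ⟨hγ0, hγ1⟩ := hγ
  have hcoef : ∀ s, 0 ≤ 1 - r s ∧ 1 - r s ≤ 1 := by
    intro s; rcases hr s with h | h <;> rw [h] <;> norm_num
  -- bound on inf'
  have hinf : ∀ (V : S →ᵇ ℝ) s a, |(T s a).inf' (hT s a) V| ≤ ‖V‖ := by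
    intro V s a
    obtain ⟨x, hx, he⟩ := (T s a).exists_mem_eq_inf' (hT s a) V
    rw [he, ← Real.norm_eq_abs]; exact V.norm_coe_le_norm x
  have hsum : ∀ (V : S →ᵇ ℝ) s, |∑ a, π s a * (T s a).inf' (hT s a) V| ≤ ‖V‖ := by
    intro V s
    calc |∑ a, π s a * (T s a).inf' (hT s a) V|
        ≤ ∑ a, |π s a * (T s a).inf' (hT s a) V| := Finset.abs_sum_le_sum_abs _ _
      _ ≤ ∑ a, π s a * ‖V‖ := by
          refine Finset.sum_le_sum fun a _ => ?_
          rw [abs_mul, abs_of_nonneg (hπ0 s a)]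
          exact mul_le_mul_of_nonneg_left (hinf V s a) (hπ0 s a)
      _ = ‖V‖ := by rw [← Finset.sum_mul, hπ1, one_mul]
  -- pointwise bound on the operator value
  have hpt : ∀ (V : S →ᵇ ℝ) s,
      |r s + γ * (1 - r s) * ∑ a, π s a * (T s a).inf' (hT s a) V| ≤ 1 + ‖V‖ := by
    intro V s
    have h1 : |r s| ≤ 1 := by rcases hr s with h | h <;> rw [h] <;> norm_num
    have h2 : |γ * (1 - r s) * ∑ a, π s a * (T s a).inf' (hT s a) V| ≤ ‖V‖ := by
      rw [abs_mul, abs_mul, abs_of_nonneg hγ0.le, abs_of_nonneg (hcoef s).1]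
      calc γ * (1 - r s) * |∑ a, π s a * (T s a).inf' (hT s a) V|
          ≤ 1 * 1 * ‖V‖ := by
            apply mul_le_mul (mul_le_mul hγ1.le (hcoef s).2 (hcoef s).1 (by norm_num))
              (hsum V s) (abs_nonneg _) (by norm_num)
        _ = ‖V‖ := by ring
    calc |r s + γ * (1 - r s) * ∑ a, π s a * (T s a).inf' (hT s a) V|
        ≤ |r s| + |γ * (1 - r s) * ∑ a, π s a * (T s a).inf' (hT s a) V| := abs_add_le _ _
      _ ≤ 1 + ‖V‖ := add_le_add h1 h2
  -- the operator
  set B : (S →ᵇ ℝ) → (S →ᵇ ℝ) := fun V =>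
    BoundedContinuousFunction.mkOfBound
      ⟨fun s => r s + γ * (1 - r s) * ∑ a, π s a * (T s a).inf' (hT s a) V,
        continuous_of_discreteTopology⟩
      (2 * (1 + ‖V‖))
      (fun x y => by
        calc dist _ _ ≤ |_| + |_| := abs_sub _ _
          _ ≤ (1 + ‖V‖) + (1 + ‖V‖) := add_le_add (hpt V x) (hpt V y)
          _ = 2 * (1 + ‖V‖) := by ring) with hBdef
  have hBapp : ∀ (V : S →ᵇ ℝ) s,
      B V s = r s + γ * (1 - r s) * ∑ a, π s a * (T s a).inf' (hT s a) V := fun _ _ => rfl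
  -- contraction
  set K : NNReal := ⟨γ, hγ0.le⟩ with hK
  have hB : ContractingWith K B := by
    constructor
    · exact_mod_cast hγ1
    · apply LipschitzWith.of_dist_le_mul
      intro V W
      have hKγ : (K : ℝ) = γ := rfl
      rw [hKγ]
      refine BoundedContinuousFunction.dist_le (by positivity) |>.2 fun s => ?_
      have hptdiff : ∀ a, |(T s a).inf' (hT s a) V - (T s a).inf' (hT s a) W| ≤ dist V W := by
        intro a
        apply abs_inf'_sub_inf'_le
        intro x _
        exact (BoundedContinuousFunction.dist_coe_le_dist x :
          dist (V x) (W x) ≤ dist V W) |>.trans_eq' (Real.dist_eq _ _)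
      have key : dist (B V s) (B W s)
          = γ * (1 - r s) * |∑ a, π s a * ((T s a).inf' (hT s a) V - (T s a).inf' (hT s a) W)| := by
        rw [Real.dist_eq, hBapp, hBapp]
        have : (r s + γ * (1 - r s) * ∑ a, π s a * (T s a).inf' (hT s a) V)
            - (r s + γ * (1 - r s) * ∑ a, π s a * (T s a).inf' (hT s a) W)
            = γ * (1 - r s) * ∑ a, π s a * ((T s a).inf' (hT s a) V - (T s a).inf' (hT s a) W) := by
          rw [Finset.mul_sum, Finset.mul_sum, Finset.mul_sum, add_sub_add_left_eq_sub,
            ← Finset.sum_sub_distrib]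
          exact Finset.sum_congr rfl fun a _ => by ring
        rw [this, abs_mul, abs_of_nonneg (mul_nonneg hγ0.le (hcoef s).1)]
      rw [key]
      calc γ * (1 - r s) * |∑ a, π s a * ((T s a).inf' (hT s a) V - (T s a).inf' (hT s a) W)|
          ≤ γ * 1 * (∑ a, π s a * dist V W) := by
            apply mul_le_mul
            · exact mul_le_mul_of_nonneg_left (hcoef s).2 hγ0.le
            · calc |∑ a, π s a * ((T s a).inf' (hT s a) V - (T s a).inf' (hT s a) W)|
                  ≤ ∑ a, |π s a * ((T s a).inf' (hT s a) V - (T s a).inf' (hT s a) W)| :=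
                    Finset.abs_sum_le_sum_abs _ _
                _ ≤ ∑ a, π s a * dist V W := by
                    refine Finset.sum_le_sum fun a _ => ?_
                    rw [abs_mul, abs_of_nonneg (hπ0 s a)]
                    exact mul_le_mul_of_nonneg_left (hptdiff a) (hπ0 s a)
            · exact abs_nonneg _
            · positivity
        _ = γ * dist V W := by rw [← Finset.sum_mul, hπ1]; ring
  -- conclude
  refine ⟨hB.fixedPoint B, ?_, ?_⟩
  · intro s
    conv_lhs => rw [← hB.fixedPoint_isFixedPt]
    exact hBapp _ s
  · intro W hW
    apply hB.fixedPoint_unique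
    ext s
    rw [hBapp]
    exact (hW s).symm
end

section
/- Let S, A, T, r, γ be a worst-path tree MDP, π a stochastic policy with value V^π (the unique bounded fixed point of B^π), advantage A^π(s,a) = r s + γ·(1 − r s)·min_{s' ∈ T s a} V^π(s') − V^π(s), and β ≥ 0. Define the reweighted policy π'(s, a) = π s a · exp(β · A^π(s,a)) / Z(s) with Z(s) = ∑_{a ∈ A} π s a · exp(β · A^π(s,a)). Then π' is a stochastic policy and the one-step improvement inequality holds: (B^{π'} V^π)(s) ≥ V^π(s) for every state s. -/
open BoundedContinuousFunction

/-- Weighted Chebyshev sum inequality. -/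
lemma cheb {A : Type*} [Fintype A] (w f g : A → ℝ) (hw : ∀ a, 0 ≤ w a)
    (hfg : ∀ a b, 0 ≤ (f a - f b) * (g a - g b)) :
    (∑ a, w a * f a) * (∑ a, w a * g a) ≤ (∑ a, w a) * (∑ a, w a * (f a * g a)) := by
  have key : (0:ℝ) ≤ ∑ a, ∑ b, w a * w b * ((f a - f b) * (g a - g b)) := by
    apply Finset.sum_nonneg; intro a _; apply Finset.sum_nonneg; intro b _
    exact mul_nonneg (mul_nonneg (hw a) (hw b)) (hfg a b)
  have expand : ∑ a, ∑ b, w a * w b * ((f a - f b) * (g a - g b))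
      = 2 * ((∑ a, w a) * (∑ a, w a * (f a * g a)) - (∑ a, w a * f a) * (∑ a, w a * g a)) := by
    have h1 : ∀ a : A, ∑ b, w a * w b * ((f a - f b) * (g a - g b))
        = w a * (f a * g a) * (∑ b, w b) - w a * f a * (∑ b, w b * g b)
          - w a * g a * (∑ b, w b * f b) + w a * (∑ b, w b * (f b * g b)) := by
      intro a
      rw [Finset.mul_sum, Finset.mul_sum, Finset.mul_sum, Finset.mul_sum,
        ← Finset.sum_sub_distrib, ← Finset.sum_sub_distrib, ← Finset.sum_add_distrib]
      apply Finset.sum_congr rfl; intro b _; ring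
    simp only [h1]
    rw [Finset.sum_add_distrib, Finset.sum_sub_distrib, Finset.sum_sub_distrib,
      ← Finset.sum_mul, ← Finset.sum_mul, ← Finset.sum_mul, ← Finset.sum_mul]
    ring
  linarith [key, expand ▸ key]

/-- The exponentially reweighted policy `π'` is a stochastic policy, and it satisfies
the one-step improvement inequality `(B^π' V^π)(s) ≥ V^π(s)` for every state. -/
theorem reweighted_policy_one_step_improvement {S A : Type*} [Fintype A] [Nonempty A]
    [TopologicalSpace S] [DiscreteTopology S]
    (T : S → A → Finset S) (hT : ∀ s a, (T s a).Nonempty)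
    (r : S → ℝ) (hr : ∀ s, r s = 0 ∨ r s = 1)
    (γ : ℝ) (hγ : γ ∈ Set.Ioo (0:ℝ) 1)
    (π : S → A → ℝ) (hπ0 : ∀ s a, 0 ≤ π s a) (hπ1 : ∀ s, ∑ a, π s a = 1)
    (Vpi : S →ᵇ ℝ)
    (hfixPi : ∀ s, Vpi s = r s + γ * (1 - r s) * ∑ a, π s a * (T s a).inf' (hT s a) Vpi)
    (β : ℝ) (hβ : 0 ≤ β)
    (Adv : S → A → ℝ)
    (hAdv : ∀ s a, Adv s a
      = r s + γ * (1 - r s) * (T s a).inf' (hT s a) Vpi - Vpi s)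
    (π' : S → A → ℝ)
    (hπ' : ∀ s a, π' s a
      = π s a * Real.exp (β * Adv s a) / ∑ b, π s b * Real.exp (β * Adv s b)) :
    (∀ s a, 0 ≤ π' s a) ∧ (∀ s, ∑ a, π' s a = 1) ∧
    (∀ s, Vpi s ≤ r s + γ * (1 - r s) * ∑ a, π' s a * (T s a).inf' (hT s a) Vpi) := by
  have hZpos : ∀ s, 0 < ∑ b, π s b * Real.exp (β * Adv s b) := by
    intro s
    obtain ⟨a, ha⟩ : ∃ a, 0 < π s a := by
      by_contra h
      push_neg at h
      have : ∑ a, π s a = 0 := Finset.sum_eq_zero fun a _ => le_antisymm (h a) (hπ0 s a)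
      rw [hπ1 s] at this; norm_num at this
    apply Finset.sum_pos' (fun b _ => mul_nonneg (hπ0 s b) (Real.exp_pos _).le)
    exact ⟨a, Finset.mem_univ a, mul_pos ha (Real.exp_pos _)⟩
  have h0 : ∀ s a, 0 ≤ π' s a := by
    intro s a
    rw [hπ' s a]
    exact div_nonneg (mul_nonneg (hπ0 s a) (Real.exp_pos _).le) (hZpos s).le
  have h1 : ∀ s, ∑ a, π' s a = 1 := by
    intro s
    simp only [hπ' s]
    rw [← Finset.sum_div, div_self (hZpos s).ne']
  refine ⟨h0, h1, fun s => ?_⟩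
  set c := γ * (1 - r s) with hc
  have hcnn : 0 ≤ c := by
    rcases hr s with h | h <;> simp [hc, h] <;> nlinarith [hγ.1, hγ.2]
  set m : A → ℝ := fun a => (T s a).inf' (hT s a) Vpi with hm
  set e : A → ℝ := fun a => Real.exp (β * Adv s a) with he
  have hAdvle : ∀ a b : A, m a ≤ m b → e a ≤ e b := by
    intro a b h
    have harg : β * Adv s a ≤ β * Adv s b := by
      apply mul_le_mul_of_nonneg_left _ hβ
      rw [hAdv s a, hAdv s b]
      have : c * m a ≤ c * m b := mul_le_mul_of_nonneg_left h hcnn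
      simp only [← hc, ← hm] at *
      linarith
    simpa [he] using Real.exp_le_exp.2 harg
  have hmono : ∀ a b, 0 ≤ (m a - m b) * (e a - e b) := by
    intro a b
    rcases le_total (m a) (m b) with h | h
    · have := hAdvle a b h; nlinarith
    · have := hAdvle b a h; nlinarith
  have hcheb := cheb (π s) m e (hπ0 s) hmono
  rw [hπ1 s, one_mul] at hcheb
  -- ∑ π m ≤ ∑ π' m
  have hsum : ∑ a, π s a * m a ≤ ∑ a, π' s a * m a := by
    have hZ := hZpos s
    have hZ' : 0 < ∑ b, π s b * e b := by simpa [he] using hZ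
    have heq : ∑ a, π' s a * m a = (∑ a, π s a * (m a * e a)) / (∑ b, π s b * e b) := by
      rw [eq_div_iff hZ'.ne', Finset.sum_mul]
      apply Finset.sum_congr rfl; intro a _
      rw [hπ' s a]
      simp only [he]
      field_simp
    rw [heq, le_div_iff₀ hZ']
    simpa [he, mul_comm] using hcheb
  calc Vpi s = r s + c * ∑ a, π s a * m a := hfixPi s
    _ ≤ r s + c * ∑ a, π' s a * m a := by
        have := mul_le_mul_of_nonneg_left hsum hcnn; linarith
end

section
/- Let S, A, T, r, γ be a worst-path tree MDP, π a stochastic policy with value V^π (the unique bounded fixed point of B^π), advantage A^π(s,a) = r s + γ·(1 − r s)·min_{s' ∈ T s a} V^π(s') − V^π(s), and β ≥ 0. Let π' be the exponentially reweighted policy π'(s, a) = π s a · exp(β · A^π(s,a)) / Z(s) with Z(s) = ∑_{a ∈ A} π s a · exp(β · A^π(s,a)), and let V^{π'} be the unique bounded fixed point of B^{π'}. Then the update yields monotonic improvement: V^{π'}(s) ≥ V^π(s) for every state s. -/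
open BoundedContinuousFunction

/-- Monotonic policy improvement: the worst-path value of the exponentially
reweighted policy `π'` dominates the worst-path value of `π` at every state. -/
theorem reweighted_policy_monotonic_improvement {S A : Type*} [Fintype A] [Nonempty A]
    [TopologicalSpace S] [DiscreteTopology S]
    (T : S → A → Finset S) (hT : ∀ s a, (T s a).Nonempty)
    (r : S → ℝ) (hr : ∀ s, r s = 0 ∨ r s = 1)
    (γ : ℝ) (hγ : γ ∈ Set.Ioo (0:ℝ) 1)
    (π : S → A → ℝ) (hπ0 : ∀ s a, 0 ≤ π s a) (hπ1 : ∀ s, ∑ a, π s a = 1)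
    (Vpi : S →ᵇ ℝ)
    (hfixPi : ∀ s, Vpi s = r s + γ * (1 - r s) * ∑ a, π s a * (T s a).inf' (hT s a) Vpi)
    (β : ℝ) (hβ : 0 ≤ β)
    (Adv : S → A → ℝ)
    (hAdv : ∀ s a, Adv s a
      = r s + γ * (1 - r s) * (T s a).inf' (hT s a) Vpi - Vpi s)
    (π' : S → A → ℝ)
    (hπ' : ∀ s a, π' s a
      = π s a * Real.exp (β * Adv s a) / ∑ b, π s b * Real.exp (β * Adv s b))
    (Vpi' : S →ᵇ ℝ)
    (hfixPi' : ∀ s, Vpi' s = r s + γ * (1 - r s) *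
        ∑ a, π' s a * (T s a).inf' (hT s a) Vpi') :
    ∀ s, Vpi s ≤ Vpi' s := by
  obtain ⟨hγ0, hγ1⟩ := hγ
  set M := ‖Vpi - Vpi'‖ with hM
  have hMnn : 0 ≤ M := norm_nonneg _
  have hZpos : ∀ s, 0 < ∑ b, π s b * Real.exp (β * Adv s b) := by
    intro s
    have hex : ∃ a, 0 < π s a := by
      by_contra h
      push_neg at h
      have hz : ∑ a, π s a = 0 :=
        Finset.sum_eq_zero fun a _ => le_antisymm (h a) (hπ0 s a)
      rw [hπ1 s] at hz; norm_num at hz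
    obtain ⟨a, ha⟩ := hex
    exact Finset.sum_pos' (fun b _ => mul_nonneg (hπ0 s b) (Real.exp_pos _).le)
      ⟨a, Finset.mem_univ a, mul_pos ha (Real.exp_pos _)⟩
  have hπ'0 : ∀ s a, 0 ≤ π' s a := fun s a => by
    rw [hπ' s a]
    exact div_nonneg (mul_nonneg (hπ0 s a) (Real.exp_pos _).le) (hZpos s).le
  have hπ'1 : ∀ s, ∑ a, π' s a = 1 := by
    intro s
    simp only [hπ']
    rw [← Finset.sum_div, div_self (hZpos s).ne']
  have hr01 : ∀ s, 0 ≤ 1 - r s ∧ 1 - r s ≤ 1 := by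
    intro s; rcases hr s with h | h <;> simp [h]
  -- π-weighted advantage is zero
  have hsum0 : ∀ s, ∑ a, π s a * Adv s a = 0 := by
    intro s
    have h1 : ∑ a, π s a * Adv s a
        = r s * ∑ a, π s a + γ * (1 - r s) * ∑ a, π s a * (T s a).inf' (hT s a) Vpi
          - Vpi s * ∑ a, π s a := by
      rw [Finset.mul_sum, Finset.mul_sum, Finset.mul_sum, ← Finset.sum_add_distrib,
        ← Finset.sum_sub_distrib]
      refine Finset.sum_congr rfl fun a _ => ?_
      rw [hAdv]; ring
    rw [h1, hπ1 s]
    have := hfixPi s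
    linarith
  -- π'-weighted advantage is nonnegative
  have hsum' : ∀ s, 0 ≤ ∑ a, π' s a * Adv s a := by
    intro s
    have hterm : ∀ a, π s a * Adv s a ≤ π s a * Real.exp (β * Adv s a) * Adv s a := by
      intro a
      have hx : 0 ≤ Adv s a * (Real.exp (β * Adv s a) - 1) := by
        rcases le_or_gt 0 (Adv s a) with h | h
        · have : (1:ℝ) ≤ Real.exp (β * Adv s a) :=
            Real.one_le_exp (mul_nonneg hβ h)
          nlinarith
        · have : Real.exp (β * Adv s a) ≤ 1 :=
            Real.exp_le_one_iff.mpr (mul_nonpos_of_nonneg_of_nonpos hβ h.le)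
          nlinarith
      nlinarith [hπ0 s a]
    have h1 : (0:ℝ) ≤ ∑ a, π s a * Real.exp (β * Adv s a) * Adv s a := by
      calc (0:ℝ) = ∑ a, π s a * Adv s a := (hsum0 s).symm
        _ ≤ _ := Finset.sum_le_sum fun a _ => hterm a
    have h2 : ∑ a, π' s a * Adv s a
        = (∑ a, π s a * Real.exp (β * Adv s a) * Adv s a)
          / (∑ b, π s b * Real.exp (β * Adv s b)) := by
      rw [Finset.sum_div]
      refine Finset.sum_congr rfl fun a _ => ?_
      rw [hπ']; ring
    rw [h2]
    exact div_nonneg h1 (hZpos s).le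
  -- one-step improvement
  have hstep : ∀ s,
      Vpi s ≤ r s + γ * (1 - r s) * ∑ a, π' s a * (T s a).inf' (hT s a) Vpi := by
    intro s
    have h := hsum' s
    have heq : ∑ a, π' s a * Adv s a
        = r s + γ * (1 - r s) * ∑ a, π' s a * (T s a).inf' (hT s a) Vpi - Vpi s := by
      have h1 : ∑ a, π' s a * Adv s a
          = r s * ∑ a, π' s a
            + γ * (1 - r s) * ∑ a, π' s a * (T s a).inf' (hT s a) Vpi
            - Vpi s * ∑ a, π' s a := by
        rw [Finset.mul_sum, Finset.mul_sum, Finset.mul_sum, ← Finset.sum_add_distrib,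
          ← Finset.sum_sub_distrib]
        exact Finset.sum_congr rfl fun a _ => by rw [hAdv]; ring
      rw [h1, hπ'1 s]; ring
    rw [heq] at h
    linarith
  -- induction: Vpi ≤ Vpi' + γ^n * M
  have hind : ∀ n : ℕ, ∀ s, Vpi s ≤ Vpi' s + γ ^ n * M := by
    intro n
    induction n with
    | zero =>
      intro s
      have h := BoundedContinuousFunction.norm_coe_le_norm (Vpi - Vpi') s
      rw [BoundedContinuousFunction.coe_sub] at h
      have h2 := (abs_le.mp (by simpa using h)).2
      simp only [pow_zero, one_mul]
      linarith
    | succ n ih =>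
      intro s
      have hinf : ∀ a, (T s a).inf' (hT s a) Vpi
          ≤ (T s a).inf' (hT s a) Vpi' + γ ^ n * M := by
        intro a
        obtain ⟨t, ht, hteq⟩ := (T s a).exists_mem_eq_inf' (hT s a) Vpi'
        calc (T s a).inf' (hT s a) Vpi ≤ Vpi t := Finset.inf'_le _ ht
          _ ≤ Vpi' t + γ ^ n * M := ih t
          _ = _ := by rw [hteq]
      have hsumle : ∑ a, π' s a * (T s a).inf' (hT s a) Vpi
          ≤ (∑ a, π' s a * (T s a).inf' (hT s a) Vpi') + γ ^ n * M := by
        calc ∑ a, π' s a * (T s a).inf' (hT s a) Vpi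
            ≤ ∑ a, π' s a * ((T s a).inf' (hT s a) Vpi' + γ ^ n * M) :=
              Finset.sum_le_sum fun a _ =>
                mul_le_mul_of_nonneg_left (hinf a) (hπ'0 s a)
          _ = _ := by
              simp only [mul_add, Finset.sum_add_distrib, ← Finset.sum_mul, hπ'1 s,
                one_mul]
      obtain ⟨hra, hrb⟩ := hr01 s
      have h1 := hstep s
      have h2 : γ * (1 - r s) * ∑ a, π' s a * (T s a).inf' (hT s a) Vpi
          ≤ γ * (1 - r s) * ((∑ a, π' s a * (T s a).inf' (hT s a) Vpi') + γ ^ n * M) :=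
        mul_le_mul_of_nonneg_left hsumle (mul_nonneg hγ0.le hra)
      have h3 : γ * (1 - r s) * (γ ^ n * M) ≤ γ ^ (n + 1) * M := by
        have hp : (0:ℝ) ≤ γ ^ n * M := mul_nonneg (pow_nonneg hγ0.le n) hMnn
        calc γ * (1 - r s) * (γ ^ n * M) ≤ γ * 1 * (γ ^ n * M) := by
              nlinarith [mul_le_mul_of_nonneg_right hrb (mul_nonneg hγ0.le hp)]
          _ = γ ^ (n + 1) * M := by ring
      have h4 := hfixPi' s
      nlinarith
  intro s₀
  have hlim : Filter.Tendsto (fun n : ℕ => γ ^ n * M) Filter.atTop (nhds 0) := by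
    have h := tendsto_pow_atTop_nhds_zero_of_lt_one hγ0.le hγ1
    simpa using h.mul_const M
  have hfin : Vpi s₀ - Vpi' s₀ ≤ 0 :=
    ge_of_tendsto' hlim fun n => by linarith [hind n s₀]
  linarith
end
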